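/- Set μ_δ := δ·∫_0^{2/(3δ)} x·f(x) dx, and suppose μ_δ ≤ 2/3. Then for every integer n ≥ 2, Q_δ(n) ≤ ∏_{i=1}^{n−1} ((i+1)/(i+2) − μ_δ). -/

import Mathlib

open scoped BigOperators
open Filter Set MeasureTheory

/-- `Q f δ n = ℙ(τ ≥ n)` for the 1-d senile reinforced random walk stochastically
perturbed by `δ·ξ_n`, with `ξ_n` i.i.d. with density `f` on `[0,∞)`:
`Q_δ(n) = ∏_{i=1}^{n-1} ∫_0^{(i+1)/(δ(i+2))} ((i+1)/(i+2) - δx) f(x) dx`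
(`Q f δ 1 = 1` since the product is empty). -/
noncomputable def Q (f : ℝ → ℝ) (δ : ℝ) (n : ℕ) : ℝ :=
  ∏ i ∈ Finset.Icc 1 (n - 1),
    ∫ x in Set.Ioc (0 : ℝ) (((i : ℝ) + 1) / (δ * ((i : ℝ) + 2))),
      (((i : ℝ) + 1) / ((i : ℝ) + 2) - δ * x) * f x

/-!
Each factor of `Q f δ n` is compared with the matching factor on the right separately. Since `f`
has mass at most one on `(0, ∞)`, the factor is at most `a - δ ∫_0^{a/δ} x f(x) dx` with
`a = (i+1)/(i+2)`, and `a ≥ 2/3` makes the truncation point `a/δ` at least `2/(3δ)`. The factors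
of `Q` are integrals of nonnegative functions, so the factorwise bounds multiply.
-/

section TruncatedLinearWeight

variable {f : ℝ → ℝ} {a b c δ : ℝ}

lemma integrableOn_Ioc_id_mul (hf : IntegrableOn f (Ioc 0 b)) :
    IntegrableOn (fun x => x * f x) (Ioc 0 b) :=
  hf.bdd_mul (c := b) continuous_id.aestronglyMeasurable <| by
    filter_upwards [ae_restrict_mem measurableSet_Ioc] with x hx
    rw [Real.norm_eq_abs, abs_of_pos hx.1]
    exact hx.2

lemma setIntegral_Ioc_sub_mul_nonneg (hf : ∀ x, 0 ≤ f x) (hδ : 0 < δ) :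
    0 ≤ ∫ x in Ioc 0 (a / δ), (a - δ * x) * f x :=
  setIntegral_nonneg measurableSet_Ioc fun x hx =>
    mul_nonneg (sub_nonneg.2 ((le_div_iff₀' hδ).1 hx.2)) (hf x)

lemma setIntegral_Ioc_sub_mul_le (hf : IntegrableOn f (Ioi 0)) (hf0 : ∀ x, 0 ≤ f x)
    (hmass : ∫ x in Ioi 0, f x ≤ 1) (ha : 0 ≤ a) (hδ : 0 < δ) (hc : c ≤ a / δ) :
    ∫ x in Ioc 0 (a / δ), (a - δ * x) * f x ≤ a - δ * ∫ x in Ioc 0 c, x * f x := by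
  set b := a / δ
  have hfb : IntegrableOn f (Ioc 0 b) := hf.mono_set Ioc_subset_Ioi_self
  have hxf : IntegrableOn (fun x => x * f x) (Ioc 0 b) := integrableOn_Ioc_id_mul hfb
  have hmass_b : ∫ x in Ioc 0 b, f x ≤ 1 :=
    (setIntegral_mono_set hf (ae_of_all _ hf0) Ioc_subset_Ioi_self.eventuallyLE).trans hmass
  have hmoment : ∫ x in Ioc 0 c, x * f x ≤ ∫ x in Ioc 0 b, x * f x := by
    refine setIntegral_mono_set hxf ?_ (Ioc_subset_Ioc_right hc).eventuallyLE
    filter_upwards [ae_restrict_mem measurableSet_Ioc] with x hx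
    exact mul_nonneg hx.1.le (hf0 x)
  calc ∫ x in Ioc 0 b, (a - δ * x) * f x
      = (a * ∫ x in Ioc 0 b, f x) - δ * ∫ x in Ioc 0 b, x * f x := by
        simp_rw [sub_mul, mul_assoc]
        rw [integral_sub (hfb.const_mul a) (hxf.const_mul δ), integral_const_mul,
          integral_const_mul]
    _ ≤ a - δ * ∫ x in Ioc 0 c, x * f x := by
        have := mul_le_mul_of_nonneg_left hmass_b ha
        have := mul_le_mul_of_nonneg_left hmoment hδ.le
        linarith

end TruncatedLinearWeight

lemma two_thirds_le_succ_div_succ_succ {i : ℕ} (hi : 1 ≤ i) :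
    (2 : ℝ) / 3 ≤ ((i : ℝ) + 1) / ((i : ℝ) + 2) := by
  rw [div_le_div_iff₀ (by norm_num) (by positivity)]
  have : (1 : ℝ) ≤ i := by exact_mod_cast hi
  linarith

theorem Q_le_deterministic_bound_general
    (f : ℝ → ℝ) (hnonneg : ∀ x, 0 ≤ f x)
    (hdensity : ∫ x in Set.Ioi (0 : ℝ), f x = 1)
    (δ : ℝ) (hδ : 0 < δ) :
    ∀ n : ℕ, 2 ≤ n →
      Q f δ n ≤ ∏ i ∈ Finset.Icc 1 (n - 1),
        (((i : ℝ) + 1) / ((i : ℝ) + 2) -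
          δ * ∫ x in Set.Ioc (0 : ℝ) (2 / (3 * δ)), x * f x) := by
  intro n _
  have hf : IntegrableOn f (Ioi 0) :=
    Integrable.of_integral_ne_zero (by rw [hdensity]; exact one_ne_zero)
  refine Finset.prod_le_prod (fun i _ => ?_) (fun i hi => ?_) <;>
    rw [div_mul_eq_div_div_swap ((i : ℝ) + 1)]
  · exact setIntegral_Ioc_sub_mul_nonneg hnonneg hδ
  · refine setIntegral_Ioc_sub_mul_le hf hnonneg hdensity.le (by positivity) hδ ?_
    rw [← div_div]
    exact div_le_div_of_nonneg_right
      (two_thirds_le_succ_div_succ_succ (Finset.mem_Icc.1 hi).1) hδ.le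

/-- with `μ_δ := δ·∫_0^{2/(3δ)} x f(x) dx ≤ 2/3`, for every `n ≥ 2`,
`Q_δ(n) ≤ ∏_{i=1}^{n-1} ((i+1)/(i+2) - μ_δ)`. -/
theorem Q_le_deterministic_bound
    (f : ℝ → ℝ) (hmeas : Measurable f) (hnonneg : ∀ x, 0 ≤ f x)
    (hdensity : ∫ x in Set.Ioi (0 : ℝ), f x = 1)
    (δ : ℝ) (hδ : 0 < δ)
    (hμ : δ * ∫ x in Set.Ioc (0 : ℝ) (2 / (3 * δ)), x * f x ≤ 2/3) :
    ∀ n : ℕ, 2 ≤ n →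
      Q f δ n ≤ ∏ i ∈ Finset.Icc 1 (n - 1),
        (((i : ℝ) + 1) / ((i : ℝ) + 2) -
          δ * ∫ x in Set.Ioc (0 : ℝ) (2 / (3 * δ)), x * f x) :=
  Q_le_deterministic_bound_general f hnonneg hdensity δ hδ
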